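/- arXiv:math/0506164 — 3 statements merged into one kernel-verified Lean document; each statement's English description precedes it below -/
import Mathlib

section
/- Let J ∈ Matrix n n ℂ be invertible with Jᴴ = J, and let T₀ ∈ Matrix n n ℂ. Define E_λ := T₀ + λ(I − T₀) for λ ∈ ℂ. Then the reality condition (E_{conj λ})ᴴ J E_{λ⁻¹} = J holds for every λ ∈ ℂ with λ ≠ 0 if and only if T₀ᴴ J = J T₀ and T₀² = T₀. Moreover, when these hold, E_λ is invertible for λ ≠ 0 with (E_{λ⁻¹})⁻¹ = E_λ, so the condition reads (E_{conj λ})ᴴ J = J (E_{λ⁻¹})⁻¹. -/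
open Complex Matrix

noncomputable section

/-- Wirtinger derivative `∂_z` of a ℂ-valued function of one complex variable,
viewed as a function of two real variables:  `∂_z F = ½(∂_x F − i ∂_y F)`. -/
def wdz (f : ℂ → ℂ) (z : ℂ) : ℂ :=
  (1 / 2 : ℂ) * (fderiv ℝ f z 1 - Complex.I * fderiv ℝ f z Complex.I)

/-- Wirtinger derivative `∂_z̄ F = ½(∂_x F + i ∂_y F)`. -/
def wdzbar (f : ℂ → ℂ) (z : ℂ) : ℂ :=
  (1 / 2 : ℂ) * (fderiv ℝ f z 1 + Complex.I * fderiv ℝ f z Complex.I)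

/-- Entrywise Wirtinger derivative `∂_z` for matrix-valued functions. -/
def mdz {n m : Type*} (F : ℂ → Matrix n m ℂ) (z : ℂ) : Matrix n m ℂ :=
  Matrix.of fun i j => wdz (fun w => F w i j) z

/-- Entrywise Wirtinger derivative `∂_z̄` for matrix-valued functions. -/
def mdzbar {n m : Type*} (F : ℂ → Matrix n m ℂ) (z : ℂ) : Matrix n m ℂ :=
  Matrix.of fun i j => wdzbar (fun w => F w i j) z

/-- A matrix-valued function is smooth on a set if each entry is `C^∞`
as a function of the two real variables. -/
def MSmoothOn {n m : Type*} (F : ℂ → Matrix n m ℂ) (Ω : Set ℂ) : Prop :=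
  ∀ i j, ContDiffOn ℝ (⊤ : ℕ∞) (fun z => F z i j) Ω

/-- for invertible Hermitian `J` and `E_λ = T₀ + λ(I − T₀)`,
the reality condition `(E_{λ̄})ᴴ J E_{λ⁻¹} = J` holds for every `λ ≠ 0` iff
`T₀ᴴJ = JT₀` and `T₀² = T₀`; moreover, in that case `E_λ` is invertible for
`λ ≠ 0` with `(E_{λ⁻¹})⁻¹ = E_λ`, i.e. `E_λ E_{λ⁻¹} = E_{λ⁻¹} E_λ = I`. -/
theorem stmt15 {n : Type*} [Fintype n] [DecidableEq n]
    (J T₀ : Matrix n n ℂ) (hJ : IsUnit J) (hJH : Jᴴ = J)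
    (E : ℂ → Matrix n n ℂ)
    (hE : ∀ lam : ℂ, E lam = T₀ + lam • (1 - T₀)) :
    ((∀ lam : ℂ, lam ≠ 0 → (E ((starRingEnd ℂ) lam))ᴴ * J * E lam⁻¹ = J)
        ↔ (T₀ᴴ * J = J * T₀ ∧ T₀ * T₀ = T₀))
      ∧ ((T₀ᴴ * J = J * T₀ ∧ T₀ * T₀ = T₀) →
          ∀ lam : ℂ, lam ≠ 0 → E lam * E lam⁻¹ = 1 ∧ E lam⁻¹ * E lam = 1) := by
  -- abbreviations
  set A := T₀ᴴ * J * T₀ with hA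
  set B := T₀ᴴ * J * (1 - T₀) with hB
  set C := (1 - T₀)ᴴ * J * T₀ with hC
  set D := (1 - T₀)ᴴ * J * (1 - T₀) with hD
  have key : ∀ a b : ℂ, (E a)ᴴ * J * E b
      = A + b • B + (starRingEnd ℂ a) • C + ((starRingEnd ℂ a) * b) • D := by
    intro a b
    simp only [hE, conjTranspose_add, conjTranspose_smul, add_mul, mul_add,
      smul_mul_assoc, mul_smul_comm, smul_smul, starRingEnd_apply, hA, hB, hC, hD]
    module
  have key2 : ∀ a b : ℂ, E a * E b
      = T₀ * T₀ + b • (T₀ * (1 - T₀)) + a • ((1 - T₀) * T₀)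
        + (a * b) • ((1 - T₀) * (1 - T₀)) := by
    intro a b
    simp only [hE, add_mul, mul_add, smul_mul_assoc, mul_smul_comm, smul_smul]
    module
  constructor
  · constructor
    · intro h
      -- evaluate at λ = 1, -1, 2
      have e1 : A + B + C + D = J := by
        have := h 1 one_ne_zero
        rw [key] at this
        simpa using this
      have e2 : A + -B + -C + D = J := by
        have := h (-1) (by norm_num)
        rw [key] at this
        simpa [inv_neg] using this
      have e3 : A + (2⁻¹ : ℂ) • B + (2 : ℂ) • C + D = J := by
        have := h 2 two_ne_zero
        rw [key] at this
        simpa using this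
      -- solve for C and B
      have hC0 : C = 0 := by
        have hkey : (3 : ℂ) • C
            = ((-3/2) : ℂ) • (A + B + C + D)
              + ((-1/2) : ℂ) • (A + -B + -C + D)
              + (2 : ℂ) • (A + (2⁻¹ : ℂ) • B + (2 : ℂ) • C + D) := by module
        rw [e1, e2, e3] at hkey
        have h3 : (3 : ℂ) • C = 0 := by
          rw [hkey]; module
        have := smul_eq_zero.mp h3
        rcases this with h | h
        · exact absurd h (by norm_num)
        · exact h
      have hB0 : B = 0 := by
        have hkey : (2 : ℂ) • B + (2 : ℂ) • C
            = (A + B + C + D) - (A + -B + -C + D) := by module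
        rw [e1, e2, hC0, sub_self, smul_zero, add_zero] at hkey
        have := smul_eq_zero.mp hkey
        rcases this with h | h
        · exact absurd h (by norm_num)
        · exact h
      -- translate B = 0 and C = 0
      have hB' : T₀ᴴ * J = T₀ᴴ * J * T₀ := by
        have : T₀ᴴ * J * (1 - T₀) = 0 := hB0
        rw [mul_sub, mul_one, sub_eq_zero] at this
        exact this
      have hC' : J * T₀ = T₀ᴴ * J * T₀ := by
        have : (1 - T₀)ᴴ * J * T₀ = 0 := hC0
        rw [conjTranspose_sub, conjTranspose_one, sub_mul, sub_mul, one_mul,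
          sub_eq_zero] at this
        exact this
      have hcomm : T₀ᴴ * J = J * T₀ := hB'.trans hC'.symm
      refine ⟨hcomm, ?_⟩
      have : J * (T₀ * T₀) = J * T₀ := by
        calc J * (T₀ * T₀) = (J * T₀) * T₀ := by rw [mul_assoc]
          _ = (T₀ᴴ * J) * T₀ := by rw [hcomm]
          _ = J * T₀ := hC'.symm
      exact hJ.mul_left_cancel this
    · rintro ⟨hcomm, hid⟩ lam hlam
      rw [key]
      have hB0 : B = 0 := by
        rw [hB, mul_sub, mul_one, hcomm, mul_assoc, hid, sub_self]
      have hC0 : C = 0 := by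
        rw [hC, conjTranspose_sub, conjTranspose_one, sub_mul, sub_mul, one_mul,
          hcomm, mul_assoc, hid, sub_self]
      have hAD : A + D = J := by
        simp only [hA, hD, conjTranspose_sub, conjTranspose_one, sub_mul, mul_sub,
          one_mul, mul_one]
        rw [hcomm, mul_assoc, hid]
        abel
      rw [hB0, hC0, smul_zero, smul_zero, add_zero, add_zero]
      rw [Complex.conj_conj, mul_inv_cancel₀ hlam, one_smul]
      exact hAD
  · rintro ⟨hcomm, hid⟩ lam hlam
    have hmul : ∀ a b : ℂ, a * b = 1 → E a * E b = 1 := by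
      intro a b hab
      rw [key2, hid, hab]
      have h1 : T₀ * (1 - T₀) = 0 := by
        rw [mul_sub, mul_one, hid, sub_self]
      have h2 : (1 - T₀) * T₀ = 0 := by
        rw [sub_mul, one_mul, hid, sub_self]
      have h3 : (1 - T₀) * (1 - T₀) = 1 - T₀ := by
        rw [sub_mul, one_mul, h1, sub_zero]
      rw [h1, h2, h3, smul_zero, smul_zero, one_smul]
      abel
    exact ⟨hmul lam lam⁻¹ (mul_inv_cancel₀ hlam),
           hmul lam⁻¹ lam (inv_mul_cancel₀ hlam)⟩
end
end

section
/- Let J := [[1,0],[0,−1]], let Ω ⊆ ℂ be open, and let f : Ω → ℂ be holomorphic with |f(z)| ≠ 1 for all z ∈ Ω. Let M : Ω → Matrix (Fin 2) (Fin 1) ℂ be the column M = (1, f)ᵀ, so that Mᴴ J M = 1 − |f|² is invertible, and define p := M (Mᴴ J M)⁻¹ Mᴴ J. Then at every point of Ω: p = (1/(1 − |f|²)) · [[1, −conj f],[f, −|f|²]], p² = p, pᴴ J = J p, and (1 − p) ∂_z̄ p = 0. -/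
open Complex Matrix

noncomputable section

lemma fderiv_real_apply {g : ℂ → ℂ} {z : ℂ} (hg : DifferentiableAt ℂ g z) (v : ℂ) :
    fderiv ℝ g z v = deriv g z * v := by
  have := (hg.hasDerivAt.hasFDerivAt.restrictScalars ℝ).fderiv
  rw [this]; simp [mul_comm]

lemma wdzbar_holo {g : ℂ → ℂ} {z : ℂ} (hg : DifferentiableAt ℂ g z) : wdzbar g z = 0 := by
  unfold wdzbar
  rw [fderiv_real_apply hg, fderiv_real_apply hg]
  ring_nf
  simp [Complex.I_sq]

lemma wdzbar_conj {g : ℂ → ℂ} {z : ℂ} (hg : DifferentiableAt ℂ g z) :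
    wdzbar (fun w => starRingEnd ℂ (g w)) z = starRingEnd ℂ (deriv g z) := by
  have h : ∀ v : ℂ, fderiv ℝ (fun w => starRingEnd ℂ (g w)) z v
      = starRingEnd ℂ (deriv g z * v) := by
    intro v
    have hc : HasFDerivAt (fun w => starRingEnd ℂ (g w))
        ((Complex.conjCLE.toContinuousLinearMap).comp (fderiv ℝ g z)) z :=
      (Complex.conjCLE.toContinuousLinearMap.hasFDerivAt).comp z
        (hg.restrictScalars ℝ).hasFDerivAt
    rw [hc.fderiv]
    simp [fderiv_real_apply hg]
  unfold wdzbar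
  rw [h, h]
  simp [_root_.map_mul]
  ring_nf
  simp [Complex.I_sq]
  ring

lemma wdzbar_mul {g h : ℂ → ℂ} {z : ℂ} (hg : DifferentiableAt ℝ g z)
    (hh : DifferentiableAt ℝ h z) :
    wdzbar (fun w => g w * h w) z = wdzbar g z * h z + g z * wdzbar h z := by
  unfold wdzbar
  rw [fderiv_fun_mul hg hh]
  simp only [ContinuousLinearMap.add_apply, ContinuousLinearMap.smul_apply, smul_eq_mul]
  ring

lemma wdzbar_const_sub {g : ℂ → ℂ} {z : ℂ} (c : ℂ) (hg : DifferentiableAt ℝ g z) :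
    wdzbar (fun w => c - g w) z = - wdzbar g z := by
  unfold wdzbar
  rw [fderiv_fun_sub (differentiableAt_const c) hg, fderiv_fun_const]
  simp
  ring

lemma wdzbar_neg {g : ℂ → ℂ} {z : ℂ} (hg : DifferentiableAt ℝ g z) :
    wdzbar (fun w => -(g w)) z = - wdzbar g z := by
  unfold wdzbar
  rw [fderiv_fun_neg]
  simp
  ring

lemma wdzbar_inv {g : ℂ → ℂ} {z : ℂ} (hg : DifferentiableAt ℝ g z) (h0 : g z ≠ 0) :
    wdzbar (fun w => (g w)⁻¹) z = -((g z)⁻¹ ^ 2) * wdzbar g z := by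
  have hinv : HasDerivAt (fun x : ℂ => x⁻¹) (-((g z) ^ 2)⁻¹) (g z) := hasDerivAt_inv h0
  have hc : HasFDerivAt (fun w => (g w)⁻¹)
      (((ContinuousLinearMap.smulRight (1 : ℂ →L[ℂ] ℂ) (-((g z) ^ 2)⁻¹)).restrictScalars ℝ).comp
        (fderiv ℝ g z)) z :=
    (hinv.hasFDerivAt.restrictScalars ℝ).comp z hg.hasFDerivAt
  unfold wdzbar
  rw [hc.fderiv]
  simp only [ContinuousLinearMap.coe_comp', Function.comp_apply,
    ContinuousLinearMap.coe_restrictScalars', ContinuousLinearMap.smulRight_apply,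
    ContinuousLinearMap.one_apply, smul_eq_mul]
  field_simp
  ring

lemma differentiableAt_inv_comp {g : ℂ → ℂ} {z : ℂ} (hg : DifferentiableAt ℝ g z)
    (h0 : g z ≠ 0) : DifferentiableAt ℝ (fun w => (g w)⁻¹) z := by
  have hinv : HasDerivAt (fun x : ℂ => x⁻¹) (-((g z) ^ 2)⁻¹) (g z) := hasDerivAt_inv h0
  exact ((hinv.hasFDerivAt.restrictScalars ℝ).comp z hg.hasFDerivAt).differentiableAt

lemma differentiableAt_conj_comp {g : ℂ → ℂ} {z : ℂ} (hg : DifferentiableAt ℝ g z) :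
    DifferentiableAt ℝ (fun w => starRingEnd ℂ (g w)) z :=
  ((Complex.conjCLE.toContinuousLinearMap.hasFDerivAt).comp z hg.hasFDerivAt).differentiableAt

set_option maxHeartbeats 1000000 in
/-- for `J = diag(1,−1)` and `f` holomorphic on `Ω` with `|f| ≠ 1`,
the column `M = (1,f)ᵀ` has `MᴴJM = 1 − |f|²` invertible, and
`p := M(MᴴJM)⁻¹MᴴJ` equals `(1/(1−|f|²))·[[1, −f̄],[f, −|f|²]]` and is a
J-Hermitian holomorphic projector: `p² = p`, `pᴴJ = Jp`, `(1−p)∂_z̄p = 0` on `Ω`. -/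
theorem stmt16 (Ω : Set ℂ) (hΩ : IsOpen Ω) (f : ℂ → ℂ)
    (hf : DifferentiableOn ℂ f Ω) (hf1 : ∀ z ∈ Ω, ‖f z‖ ≠ 1)
    (J : Matrix (Fin 2) (Fin 2) ℂ) (hJ : J = !![1, 0; 0, -1])
    (M : ℂ → Matrix (Fin 2) (Fin 1) ℂ) (hM : ∀ z, M z = !![(1 : ℂ); f z])
    (p : ℂ → Matrix (Fin 2) (Fin 2) ℂ)
    (hp : ∀ z, p z = M z * ((M z)ᴴ * J * M z)⁻¹ * (M z)ᴴ * J) :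
    ∀ z ∈ Ω,
      (M z)ᴴ * J * M z
          = ((1 - Complex.normSq (f z) : ℝ) : ℂ) • (1 : Matrix (Fin 1) (Fin 1) ℂ)
        ∧ IsUnit ((M z)ᴴ * J * M z)
        ∧ p z = (((1 - Complex.normSq (f z))⁻¹ : ℝ) : ℂ) •
            !![1, -(starRingEnd ℂ) (f z); f z, -((Complex.normSq (f z) : ℝ) : ℂ)]
        ∧ p z * p z = p z
        ∧ (p z)ᴴ * J = J * p z
        ∧ (1 - p z) * mdzbar p z = 0 := by
  -- global computation of MᴴJM
  have h1 : ∀ w, (M w)ᴴ * J * M w = !![((1 - Complex.normSq (f w) : ℝ) : ℂ)] := by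
    intro w
    rw [hM, hJ]
    ext i j
    fin_cases i; fin_cases j
    simp [Matrix.mul_apply, Fin.sum_univ_succ, Complex.normSq_eq_conj_mul_self]
    ring
  have h2 : ∀ a : ℂ, (!![a])⁻¹ = !![a⁻¹] := by
    intro a
    rw [Matrix.inv_def]
    simp [Matrix.det_fin_one, Matrix.adjugate_fin_one, Ring.inverse_eq_inv']
    ext i j; fin_cases i; fin_cases j; simp
  -- global explicit formula for p
  have key : ∀ w, p w = (((1 - Complex.normSq (f w))⁻¹ : ℝ) : ℂ) •
      !![1, -(starRingEnd ℂ) (f w); f w, -((Complex.normSq (f w) : ℝ) : ℂ)] := by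
    intro w
    rw [hp, h1, h2, hM, hJ]
    ext i j
    fin_cases i <;> fin_cases j <;>
      simp [Matrix.mul_apply, Matrix.vecMul, dotProduct, Matrix.conjTranspose_apply,
        Fin.sum_univ_succ, Complex.normSq_eq_conj_mul_self] <;>
      push_cast <;> ring
  intro z hz
  have hnz : Complex.normSq (f z) ≠ 1 := by
    intro h
    apply hf1 z hz
    have : ‖f z‖ ^ 2 = 1 := by rw [← Complex.sq_norm] at h; exact h
    nlinarith [norm_nonneg (f z)]
  have hr0 : (1 - Complex.normSq (f z) : ℝ) ≠ 0 := by
    intro h; exact hnz (by linarith [sub_eq_zero.mp h])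
  have h0 : (1 : ℂ) - f z * (starRingEnd ℂ) (f z) ≠ 0 := by
    rw [Complex.mul_conj]
    intro h
    exact hnz (by exact_mod_cast (sub_eq_zero.mp h).symm)
  refine ⟨?_, ?_, key z, ?_, ?_, ?_⟩
  · rw [h1]
    ext i j; fin_cases i; fin_cases j; simp
  · rw [h1]
    rw [Matrix.isUnit_iff_isUnit_det]
    simp [Matrix.det_fin_one, isUnit_iff_ne_zero]
    exact_mod_cast hr0
  · -- p² = p
    set F := f z with hF
    set a := (starRingEnd ℂ) F with ha
    have hP' : p z = ((1:ℂ) - F * a)⁻¹ • !![1, -a; F, -(F*a)] := by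
      rw [key z]
      congr 1
      · rw [ha, Complex.mul_conj]; push_cast; ring_nf; rfl
      · rw [ha, Complex.mul_conj]
    have hu : ((1:ℂ) - F * a)⁻¹ * ((1:ℂ) - F * a) = 1 := inv_mul_cancel₀ h0
    set u := ((1:ℂ) - F * a)⁻¹ with hu'
    rw [hP']
    ext i j
    fin_cases i <;> fin_cases j <;>
      simp [Matrix.mul_apply, Fin.sum_univ_succ]
    · linear_combination u * hu
    · linear_combination (-(u*a)) * hu
    · linear_combination (u*F) * hu
    · linear_combination (-(u*a*F)) * hu
  · -- pᴴJ = Jp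
    rw [key z, hJ]
    ext i j
    fin_cases i <;> fin_cases j <;>
      simp [Matrix.mul_apply, Fin.sum_univ_succ, Matrix.conjTranspose_apply, Complex.conj_conj]
  · -- (1 - p)∂̄p = 0
    have hfz : DifferentiableAt ℂ f z := hf.differentiableAt (hΩ.mem_nhds hz)
    have hfR : DifferentiableAt ℝ f z := hfz.restrictScalars ℝ
    have hcj : DifferentiableAt ℝ (fun w => starRingEnd ℂ (f w)) z :=
      differentiableAt_conj_comp hfR
    have hq : DifferentiableAt ℝ (fun w => f w * starRingEnd ℂ (f w)) z := hfR.mul hcj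
    have hone : DifferentiableAt ℝ (fun w => (1:ℂ) - f w * starRingEnd ℂ (f w)) z :=
      (differentiableAt_const _).sub hq
    have hone0 : (1:ℂ) - f z * starRingEnd ℂ (f z) ≠ 0 := h0
    have hC : DifferentiableAt ℝ (fun w => ((1:ℂ) - f w * starRingEnd ℂ (f w))⁻¹) z :=
      differentiableAt_inv_comp hone hone0
    set F := f z with hF
    set a := (starRingEnd ℂ) F with ha
    set d := deriv f z with hd
    set e := (starRingEnd ℂ) d with he
    set u := ((1:ℂ) - F * a)⁻¹ with hu'
    -- wdzbar values
    have w_f : wdzbar f z = 0 := wdzbar_holo hfz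
    have w_cj : wdzbar (fun w => starRingEnd ℂ (f w)) z = e := wdzbar_conj hfz
    have w_q : wdzbar (fun w => f w * starRingEnd ℂ (f w)) z = F * e := by
      rw [wdzbar_mul hfR hcj, w_f, w_cj]; ring
    have w_one : wdzbar (fun w => (1:ℂ) - f w * starRingEnd ℂ (f w)) z = -(F * e) := by
      rw [wdzbar_const_sub _ hq, w_q]
    have w_C : wdzbar (fun w => ((1:ℂ) - f w * starRingEnd ℂ (f w))⁻¹) z
        = u ^ 2 * (F * e) := by
      rw [wdzbar_inv hone hone0, w_one]
      simp only [← hu', ← hF, ← ha]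
      ring
    -- entry functions of p
    have cast1 : ∀ x : ℂ, ((((1 - Complex.normSq x)⁻¹ : ℝ)) : ℂ)
        = ((1:ℂ) - x * starRingEnd ℂ x)⁻¹ := by
      intro x; push_cast; rw [Complex.mul_conj]
    have cast2 : ∀ x : ℂ, ((Complex.normSq x : ℝ) : ℂ) = x * starRingEnd ℂ x := fun x =>
      (Complex.mul_conj x).symm
    have ent : ∀ w, p w = Matrix.of fun i j =>
        ![![((1:ℂ) - f w * starRingEnd ℂ (f w))⁻¹,
           -(((1:ℂ) - f w * starRingEnd ℂ (f w))⁻¹ * starRingEnd ℂ (f w))],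
          ![((1:ℂ) - f w * starRingEnd ℂ (f w))⁻¹ * f w,
           -(((1:ℂ) - f w * starRingEnd ℂ (f w))⁻¹ * (f w * starRingEnd ℂ (f w)))]] i j := by
      intro w
      rw [key w]
      ext i j
      fin_cases i <;> fin_cases j <;>
        (simp [cast1, cast2]; try ring)
    -- the four entry derivatives
    have E00 : (fun w => p w 0 0) = fun w => ((1:ℂ) - f w * starRingEnd ℂ (f w))⁻¹ := by
      funext w; rw [ent w]; simp
    have E01 : (fun w => p w 0 1) = fun w =>
        -(((1:ℂ) - f w * starRingEnd ℂ (f w))⁻¹ * starRingEnd ℂ (f w)) := by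
      funext w; rw [ent w]; simp
    have E10 : (fun w => p w 1 0) = fun w =>
        ((1:ℂ) - f w * starRingEnd ℂ (f w))⁻¹ * f w := by
      funext w; rw [ent w]; simp
    have E11 : (fun w => p w 1 1) = fun w =>
        -(((1:ℂ) - f w * starRingEnd ℂ (f w))⁻¹ * (f w * starRingEnd ℂ (f w))) := by
      funext w; rw [ent w]; simp
    have W00 : wdzbar (fun w => p w 0 0) z = u ^ 2 * (F * e) := by rw [E00, w_C]
    have W01 : wdzbar (fun w => p w 0 1) z = -(u ^ 2 * (F * e) * a + u * e) := by
      rw [E01, wdzbar_neg (g := fun w => ((1:ℂ) - f w * starRingEnd ℂ (f w))⁻¹ * starRingEnd ℂ (f w)) (hC.mul hcj), wdzbar_mul hC hcj, w_C, w_cj]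
    have W10 : wdzbar (fun w => p w 1 0) z = u ^ 2 * (F * e) * F := by
      rw [E10, wdzbar_mul hC hfR, w_C, w_f]
      simp only [← hu', ← hF]
      ring
    have W11 : wdzbar (fun w => p w 1 1) z = -(u ^ 2 * (F * e) * (F * a) + u * (F * e)) := by
      rw [E11, wdzbar_neg (g := fun w => ((1:ℂ) - f w * starRingEnd ℂ (f w))⁻¹ * (f w * starRingEnd ℂ (f w))) (hC.mul hq), wdzbar_mul hC hq, w_C, w_q]
    have hN : mdzbar p z = !![u^2*(F*e), -(u^2*(F*e)*a + u*e);
        u^2*(F*e)*F, -(u^2*(F*e)*(F*a) + u*(F*e))] := by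
      ext i j
      fin_cases i <;> fin_cases j
      · simpa [mdzbar] using W00
      · simpa [mdzbar] using W01
      · simpa [mdzbar] using W10
      · simpa [mdzbar] using W11
    have hP' : p z = u • !![1, -a; F, -(F*a)] := by
      rw [key z]
      simp only [hu', ha, hF, cast1, cast2]
    have hone1 : (1 : Matrix (Fin 2) (Fin 2) ℂ) = !![1, 0; 0, 1] := by
      ext i j; fin_cases i <;> fin_cases j <;> simp [Matrix.one_apply]
    clear_value F a d e u
    clear ent E00 E01 E10 E11 w_f w_cj w_q w_one w_C W00 W01 W10 W11 key h1 h2 hp hM hf hf1 hfz hfR hcj hq hone hC cast1 cast2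
    rw [hP', hN, hone1]
    ext i j
    fin_cases i <;> fin_cases j <;>
      simp only [Matrix.mul_apply, Fin.sum_univ_succ, Fin.sum_univ_zero, add_zero,
        Matrix.sub_apply, Matrix.smul_apply, smul_eq_mul, Matrix.zero_apply,
        Matrix.cons_val', Matrix.cons_val_zero, Matrix.cons_val_one, Matrix.head_cons,
        Matrix.head_fin_const, Matrix.empty_val', Matrix.cons_val_fin_one, hu',
        Matrix.of_apply, Fin.zero_eta, Fin.mk_one, Fin.succ_zero_eq_one, Matrix.cons_val_succ] <;>
      field_simp <;> ring
end
end

section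
/- Let H = [[1,0],[0,−1]], E₊ = [[0,1],[0,0]], E₋ = [[0,0],[1,0]] in Matrix (Fin 2) (Fin 2) ℂ. Let Ω ⊆ ℂ be open and let x, y, φ : Ω → ℝ be smooth. Define g : Ω → Matrix (Fin 2) (Fin 2) ℂ by g := exp(i x E₊) · exp(½ φ H) · exp(i y E₋) = [[1, i x],[0, 1]] · [[e^{φ/2}, 0],[0, e^{−φ/2}]] · [[1, 0],[i y, 1]]. Then g is invertible and at every point of Ω, Tr[(g⁻¹ ∂_z g)(g⁻¹ ∂_z̄ g)] = ½ ∂_z φ ∂_z̄ φ − e^{−φ}(∂_z x ∂_z̄ y + ∂_z y ∂_z̄ x). -/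
open Complex Matrix

noncomputable section

/-- Generic Wirtinger-type derivative: `s = -I` gives `wdz`, `s = I` gives `wdzbar`. -/
def wd (s : ℂ) (f : ℂ → ℂ) (z : ℂ) : ℂ :=
  (1 / 2 : ℂ) * (fderiv ℝ f z 1 + s * fderiv ℝ f z Complex.I)

lemma wdz_eq_wd (f : ℂ → ℂ) (z : ℂ) : wdz f z = wd (-Complex.I) f z := by
  unfold wdz wd; ring

lemma wdzbar_eq_wd (f : ℂ → ℂ) (z : ℂ) : wdzbar f z = wd Complex.I f z := rfl

section wdlemmas
variable {f h : ℂ → ℂ} {z s : ℂ}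

lemma wd_sub (hf : DifferentiableAt ℝ f z) (hh : DifferentiableAt ℝ h z) :
    wd s (fun w => f w - h w) z = wd s f z - wd s h z := by
  unfold wd; rw [fderiv_fun_sub hf hh]; simp; ring

lemma wd_mul (hf : DifferentiableAt ℝ f z) (hh : DifferentiableAt ℝ h z) :
    wd s (fun w => f w * h w) z = wd s f z * h z + f z * wd s h z := by
  unfold wd; rw [fderiv_fun_mul hf hh]; simp [smul_eq_mul]; ring

lemma wd_cmul (a : ℂ) (hf : DifferentiableAt ℝ f z) :
    wd s (fun w => a * f w) z = a * wd s f z := by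
  unfold wd; rw [fderiv_const_mul hf]; simp [smul_eq_mul]; ring

lemma wd_neg (hf : DifferentiableAt ℝ f z) :
    wd s (fun w => -f w) z = -wd s f z := by
  have e : (fun w => -f w) = fun w => (-1 : ℂ) * f w := by funext w; ring
  rw [e, wd_cmul _ hf]; ring

lemma wd_div_const (hf : DifferentiableAt ℝ f z) (c : ℂ) :
    wd s (fun w => f w / c) z = wd s f z / c := by
  have e : (fun w => f w / c) = fun w => c⁻¹ * f w := by funext w; ring
  rw [e, wd_cmul _ hf]; ring

lemma wd_exp (hf : DifferentiableAt ℝ f z) :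
    wd s (fun w => Complex.exp (f w)) z = Complex.exp (f z) * wd s f z := by
  have h1 : HasFDerivAt Complex.exp
      (((1 : ℂ →L[ℂ] ℂ).smulRight (Complex.exp (f z))).restrictScalars ℝ) (f z) :=
    (Complex.hasDerivAt_exp (f z)).hasFDerivAt.restrictScalars ℝ
  have h2 := (h1.comp z hf.hasFDerivAt).fderiv
  unfold wd
  rw [show (fun w => Complex.exp (f w)) = Complex.exp ∘ f from rfl, h2]
  simp [smul_eq_mul]; ring

end wdlemmas

/-- for the Gauss-decomposition parametrization
`g = exp(ixE₊)·exp(½φH)·exp(iyE₋)` with smooth real fields `x, y, φ` on open `Ω`,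
`g` is invertible and
`Tr[(g⁻¹∂_zg)(g⁻¹∂_z̄g)] = ½∂_zφ∂_z̄φ − e^{−φ}(∂_zx∂_z̄y + ∂_zy∂_z̄x)` on `Ω`. -/
theorem stmt18 (Ω : Set ℂ) (hΩ : IsOpen Ω) (x y φ : ℂ → ℝ)
    (hx : ContDiffOn ℝ (⊤ : ℕ∞) x Ω) (hy : ContDiffOn ℝ (⊤ : ℕ∞) y Ω) (hφ : ContDiffOn ℝ (⊤ : ℕ∞) φ Ω)
    (g : ℂ → Matrix (Fin 2) (Fin 2) ℂ)
    (hg : ∀ z, g z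
        = !![1, Complex.I * ((x z : ℝ) : ℂ); 0, 1]
          * !![((Real.exp (φ z / 2) : ℝ) : ℂ), 0; 0, ((Real.exp (-φ z / 2) : ℝ) : ℂ)]
          * !![1, 0; Complex.I * ((y z : ℝ) : ℂ), 1]) :
    (∀ z, IsUnit (g z))
      ∧ ∀ z ∈ Ω,
          ((g z)⁻¹ * mdz g z * ((g z)⁻¹ * mdzbar g z)).trace
            = (1 / 2 : ℂ) * wdz (fun v => ((φ v : ℝ) : ℂ)) z
                * wdzbar (fun v => ((φ v : ℝ) : ℂ)) z
              - ((Real.exp (-φ z) : ℝ) : ℂ) *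
                (wdz (fun v => ((x v : ℝ) : ℂ)) z * wdzbar (fun v => ((y v : ℝ) : ℂ)) z
                  + wdz (fun v => ((y v : ℝ) : ℂ)) z
                    * wdzbar (fun v => ((x v : ℝ) : ℂ)) z) := by
  -- the matrix g, written out explicitly
  have hgw : ∀ w, g w =
      !![Complex.exp (((φ w : ℝ) : ℂ) / 2)
            - ((x w : ℝ) : ℂ) * ((y w : ℝ) : ℂ) * Complex.exp (-((φ w : ℝ) : ℂ) / 2),
          Complex.I * (((x w : ℝ) : ℂ) * Complex.exp (-((φ w : ℝ) : ℂ) / 2));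
          Complex.I * (((y w : ℝ) : ℂ) * Complex.exp (-((φ w : ℝ) : ℂ) / 2)),
          Complex.exp (-((φ w : ℝ) : ℂ) / 2)] := by
    intro w
    rw [hg w]
    ext i j
    fin_cases i <;> fin_cases j
    · simp [Matrix.mul_apply, Fin.sum_univ_two, Complex.ofReal_exp, Complex.ofReal_div,
        Complex.ofReal_neg]
      linear_combination (((x w : ℝ) : ℂ) * ((y w : ℝ) : ℂ)
        * Complex.exp (-((φ w : ℝ) : ℂ) / 2)) * Complex.I_mul_I
    · simp [Matrix.mul_apply, Fin.sum_univ_two, Complex.ofReal_exp, Complex.ofReal_div,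
        Complex.ofReal_neg]
      ring
    · simp [Matrix.mul_apply, Fin.sum_univ_two, Complex.ofReal_exp, Complex.ofReal_div,
        Complex.ofReal_neg]
      ring
    · simp [Matrix.mul_apply, Fin.sum_univ_two, Complex.ofReal_exp, Complex.ofReal_div,
        Complex.ofReal_neg]
  have hunit : ∀ w, Complex.exp (((φ w : ℝ) : ℂ) / 2)
      * Complex.exp (-((φ w : ℝ) : ℂ) / 2) = 1 := by
    intro w
    rw [← Complex.exp_add]
    have e : ((φ w : ℝ) : ℂ) / 2 + -((φ w : ℝ) : ℂ) / 2 = 0 := by ring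
    rw [e, Complex.exp_zero]
  constructor
  · -- invertibility
    intro z
    rw [hgw z]
    refine (Matrix.isUnit_iff_isUnit_det _).mpr ?_
    have hdet : (!![Complex.exp (((φ z : ℝ) : ℂ) / 2)
            - ((x z : ℝ) : ℂ) * ((y z : ℝ) : ℂ) * Complex.exp (-((φ z : ℝ) : ℂ) / 2),
          Complex.I * (((x z : ℝ) : ℂ) * Complex.exp (-((φ z : ℝ) : ℂ) / 2));
          Complex.I * (((y z : ℝ) : ℂ) * Complex.exp (-((φ z : ℝ) : ℂ) / 2)),
          Complex.exp (-((φ z : ℝ) : ℂ) / 2)] : Matrix (Fin 2) (Fin 2) ℂ).det = 1 := by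
      rw [Matrix.det_fin_two_of]
      linear_combination (hunit z)
        - (((x z : ℝ) : ℂ) * ((y z : ℝ) : ℂ) * Complex.exp (-((φ z : ℝ) : ℂ) / 2)
            * Complex.exp (-((φ z : ℝ) : ℂ) / 2)) * Complex.I_mul_I
    rw [hdet]
    exact isUnit_one
  · intro z hz
    -- differentiability facts
    have hx' : DifferentiableAt ℝ x z :=
      (hx.contDiffAt (hΩ.mem_nhds hz)).differentiableAt (by simp)
    have hy' : DifferentiableAt ℝ y z :=
      (hy.contDiffAt (hΩ.mem_nhds hz)).differentiableAt (by simp)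
    have hφ' : DifferentiableAt ℝ φ z :=
      (hφ.contDiffAt (hΩ.mem_nhds hz)).differentiableAt (by simp)
    have hX : DifferentiableAt ℝ (fun v => ((x v : ℝ) : ℂ)) z :=
      Complex.ofRealCLM.differentiableAt.comp z hx'
    have hY : DifferentiableAt ℝ (fun v => ((y v : ℝ) : ℂ)) z :=
      Complex.ofRealCLM.differentiableAt.comp z hy'
    have hP : DifferentiableAt ℝ (fun v => ((φ v : ℝ) : ℂ)) z :=
      Complex.ofRealCLM.differentiableAt.comp z hφ'
    have hPh : DifferentiableAt ℝ (fun w => ((φ w : ℝ) : ℂ) / 2) z := by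
      have e : (fun w => ((φ w : ℝ) : ℂ) / 2) = fun w => (2⁻¹ : ℂ) * ((φ w : ℝ) : ℂ) := by
        funext w; ring
      rw [e]; exact hP.const_mul _
    have hPnh : DifferentiableAt ℝ (fun w => -((φ w : ℝ) : ℂ) / 2) z := by
      have e : (fun w => -((φ w : ℝ) : ℂ) / 2) = fun w => (-2⁻¹ : ℂ) * ((φ w : ℝ) : ℂ) := by
        funext w; ring
      rw [e]; exact hP.const_mul _
    have hexpR : Differentiable ℝ Complex.exp :=
      Differentiable.restrictScalars ℝ (𝕜' := ℂ) Complex.differentiable_exp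
    have hEH : DifferentiableAt ℝ (fun w => Complex.exp (((φ w : ℝ) : ℂ) / 2)) z :=
      (hexpR.differentiableAt).comp z hPh
    have hEM : DifferentiableAt ℝ (fun w => Complex.exp (-((φ w : ℝ) : ℂ) / 2)) z :=
      (hexpR.differentiableAt).comp z hPnh
    -- entry functions of g
    have h00 : (fun w => g w 0 0) = fun w =>
        Complex.exp (((φ w : ℝ) : ℂ) / 2)
          - ((x w : ℝ) : ℂ) * ((y w : ℝ) : ℂ) * Complex.exp (-((φ w : ℝ) : ℂ) / 2) := by
      funext w; rw [hgw w]; simp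
    have h01 : (fun w => g w 0 1) = fun w =>
        Complex.I * (((x w : ℝ) : ℂ) * Complex.exp (-((φ w : ℝ) : ℂ) / 2)) := by
      funext w; rw [hgw w]; simp
    have h10 : (fun w => g w 1 0) = fun w =>
        Complex.I * (((y w : ℝ) : ℂ) * Complex.exp (-((φ w : ℝ) : ℂ) / 2)) := by
      funext w; rw [hgw w]; simp
    have h11 : (fun w => g w 1 1) = fun w =>
        Complex.exp (-((φ w : ℝ) : ℂ) / 2) := by
      funext w; rw [hgw w]; simp
    -- entry derivatives, uniformly in s
    have key : ∀ s : ℂ, Matrix.of (fun i j => wd s (fun w => g w i j) z) =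
        !![Complex.exp (((φ z : ℝ) : ℂ) / 2) * (wd s (fun v => ((φ v : ℝ) : ℂ)) z / 2)
              - (wd s (fun v => ((x v : ℝ) : ℂ)) z * ((y z : ℝ) : ℂ)
                  + ((x z : ℝ) : ℂ) * wd s (fun v => ((y v : ℝ) : ℂ)) z)
                * Complex.exp (-((φ z : ℝ) : ℂ) / 2)
              + ((x z : ℝ) : ℂ) * ((y z : ℝ) : ℂ)
                * (wd s (fun v => ((φ v : ℝ) : ℂ)) z / 2)
                * Complex.exp (-((φ z : ℝ) : ℂ) / 2),
            Complex.I * (wd s (fun v => ((x v : ℝ) : ℂ)) z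
                  * Complex.exp (-((φ z : ℝ) : ℂ) / 2)
                - ((x z : ℝ) : ℂ) * (wd s (fun v => ((φ v : ℝ) : ℂ)) z / 2)
                  * Complex.exp (-((φ z : ℝ) : ℂ) / 2));
            Complex.I * (wd s (fun v => ((y v : ℝ) : ℂ)) z
                  * Complex.exp (-((φ z : ℝ) : ℂ) / 2)
                - ((y z : ℝ) : ℂ) * (wd s (fun v => ((φ v : ℝ) : ℂ)) z / 2)
                  * Complex.exp (-((φ z : ℝ) : ℂ) / 2)),
            -(wd s (fun v => ((φ v : ℝ) : ℂ)) z / 2)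
              * Complex.exp (-((φ z : ℝ) : ℂ) / 2)] := by
      intro s
      ext i j
      fin_cases i <;> fin_cases j
      · simp only [Matrix.of_apply, Fin.mk_zero, Fin.mk_one, Matrix.cons_val', Matrix.cons_val_zero,
          Matrix.cons_val_one, Matrix.head_cons, Matrix.head_fin_const, Matrix.empty_val',
          Matrix.cons_val_fin_one]
        show wd s (fun w => g w 0 0) z = _
        rw [h00, wd_sub hEH ((hX.fun_mul hY).fun_mul hEM), wd_exp hPh, wd_div_const hP (2:ℂ),
          wd_mul (hX.fun_mul hY) hEM, wd_mul hX hY, wd_exp hPnh, wd_div_const hP.fun_neg (2:ℂ),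
          wd_neg hP]
        ring
      · simp only [Matrix.of_apply, Fin.mk_zero, Fin.mk_one, Matrix.cons_val', Matrix.cons_val_zero,
          Matrix.cons_val_one, Matrix.head_cons, Matrix.head_fin_const, Matrix.empty_val',
          Matrix.cons_val_fin_one]
        show wd s (fun w => g w 0 1) z = _
        rw [h01, wd_cmul _ (hX.fun_mul hEM), wd_mul hX hEM, wd_exp hPnh,
          wd_div_const hP.fun_neg (2:ℂ), wd_neg hP]
        ring
      · simp only [Matrix.of_apply, Fin.mk_zero, Fin.mk_one, Matrix.cons_val', Matrix.cons_val_zero,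
          Matrix.cons_val_one, Matrix.head_cons, Matrix.head_fin_const, Matrix.empty_val',
          Matrix.cons_val_fin_one]
        show wd s (fun w => g w 1 0) z = _
        rw [h10, wd_cmul _ (hY.fun_mul hEM), wd_mul hY hEM, wd_exp hPnh,
          wd_div_const hP.fun_neg (2:ℂ), wd_neg hP]
        ring
      · simp only [Matrix.of_apply, Fin.mk_zero, Fin.mk_one, Matrix.cons_val', Matrix.cons_val_zero,
          Matrix.cons_val_one, Matrix.head_cons, Matrix.head_fin_const, Matrix.empty_val',
          Matrix.cons_val_fin_one]
        show wd s (fun w => g w 1 1) z = _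
        rw [h11, wd_exp hPnh, wd_div_const hP.fun_neg (2:ℂ), wd_neg hP]
        ring
    -- explicit inverse
    have hginv : (g z)⁻¹ =
        !![Complex.exp (-((φ z : ℝ) : ℂ) / 2),
            -(Complex.I * (((x z : ℝ) : ℂ) * Complex.exp (-((φ z : ℝ) : ℂ) / 2)));
            -(Complex.I * (((y z : ℝ) : ℂ) * Complex.exp (-((φ z : ℝ) : ℂ) / 2))),
            Complex.exp (((φ z : ℝ) : ℂ) / 2)
              - ((x z : ℝ) : ℂ) * ((y z : ℝ) : ℂ)
                * Complex.exp (-((φ z : ℝ) : ℂ) / 2)] := by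
      apply Matrix.inv_eq_left_inv
      rw [hgw z]
      ext i j
      fin_cases i <;> fin_cases j
      · simp [Matrix.mul_apply, Fin.sum_univ_two, Matrix.one_apply]
        linear_combination (hunit z) - (((x z : ℝ) : ℂ) * ((y z : ℝ) : ℂ)
          * Complex.exp (-((φ z : ℝ) : ℂ) / 2)
          * Complex.exp (-((φ z : ℝ) : ℂ) / 2)) * Complex.I_mul_I
      · simp [Matrix.mul_apply, Fin.sum_univ_two, Matrix.one_apply]
        ring
      · simp [Matrix.mul_apply, Fin.sum_univ_two, Matrix.one_apply]
        ring
      · simp [Matrix.mul_apply, Fin.sum_univ_two, Matrix.one_apply]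
        linear_combination (hunit z) - (((x z : ℝ) : ℂ) * ((y z : ℝ) : ℂ)
          * Complex.exp (-((φ z : ℝ) : ℂ) / 2)
          * Complex.exp (-((φ z : ℝ) : ℂ) / 2)) * Complex.I_mul_I
    have hmz : mdz g z = Matrix.of (fun i j => wd (-Complex.I) (fun w => g w i j) z) := by
      unfold mdz; simp only [wdz_eq_wd]
    have hmzb : mdzbar g z
        = Matrix.of (fun i j => wd Complex.I (fun w => g w i j) z) := rfl
    have hexp : ((Real.exp (-φ z) : ℝ) : ℂ)
        = Complex.exp (-((φ z : ℝ) : ℂ) / 2) * Complex.exp (-((φ z : ℝ) : ℂ) / 2) := by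
      rw [← Complex.exp_add, Complex.ofReal_exp]
      congr 1
      push_cast
      ring
    rw [hmz, hmzb, key (-Complex.I), key Complex.I, hginv]
    simp only [wdz_eq_wd, wdzbar_eq_wd]
    rw [hexp]
    set eh := Complex.exp (((φ z : ℝ) : ℂ) / 2) with heh
    set em := Complex.exp (-((φ z : ℝ) : ℂ) / 2) with hem
    set x0 := ((x z : ℝ) : ℂ) with hx0
    set y0 := ((y z : ℝ) : ℂ) with hy0
    set a1 := wd (-Complex.I) (fun v => ((x v : ℝ) : ℂ)) z with ha1
    set b1 := wd (-Complex.I) (fun v => ((y v : ℝ) : ℂ)) z with hb1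
    set c1 := wd (-Complex.I) (fun v => ((φ v : ℝ) : ℂ)) z with hc1
    set a2 := wd Complex.I (fun v => ((x v : ℝ) : ℂ)) z with ha2
    set b2 := wd Complex.I (fun v => ((y v : ℝ) : ℂ)) z with hb2
    set c2 := wd Complex.I (fun v => ((φ v : ℝ) : ℂ)) z with hc2
    have hu : eh * em = 1 := hunit z
    have hJ1 : (!![em, -(Complex.I * (x0 * em)); -(Complex.I * (y0 * em)),
            eh - x0 * y0 * em] : Matrix (Fin 2) (Fin 2) ℂ)
          * !![eh * (c1 / 2) - (a1 * y0 + x0 * b1) * em + x0 * y0 * (c1 / 2) * em,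
              Complex.I * (a1 * em - x0 * (c1 / 2) * em);
              Complex.I * (b1 * em - y0 * (c1 / 2) * em), -(c1 / 2) * em]
        = !![c1 / 2 - a1 * y0 * (em * em), Complex.I * (a1 * (em * em));
            Complex.I * (b1 - y0 * c1 + a1 * y0 * y0 * (em * em)),
            a1 * y0 * (em * em) - c1 / 2] := by
      ext i j
      fin_cases i <;> fin_cases j
      · simp [Matrix.mul_apply, Fin.sum_univ_two]
        linear_combination (c1 / 2) * hu
          - (x0 * em * (b1 * em - y0 * (c1 / 2) * em)) * Complex.I_mul_I
      · simp [Matrix.mul_apply, Fin.sum_univ_two]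
        ring
      · simp [Matrix.mul_apply, Fin.sum_univ_two]
        linear_combination (Complex.I * (b1 - y0 * c1)) * hu
      · simp [Matrix.mul_apply, Fin.sum_univ_two]
        linear_combination (-(c1 / 2)) * hu
          - (y0 * em * (a1 * em - x0 * (c1 / 2) * em)) * Complex.I_mul_I
    have hJ2 : (!![em, -(Complex.I * (x0 * em)); -(Complex.I * (y0 * em)),
            eh - x0 * y0 * em] : Matrix (Fin 2) (Fin 2) ℂ)
          * !![eh * (c2 / 2) - (a2 * y0 + x0 * b2) * em + x0 * y0 * (c2 / 2) * em,
              Complex.I * (a2 * em - x0 * (c2 / 2) * em);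
              Complex.I * (b2 * em - y0 * (c2 / 2) * em), -(c2 / 2) * em]
        = !![c2 / 2 - a2 * y0 * (em * em), Complex.I * (a2 * (em * em));
            Complex.I * (b2 - y0 * c2 + a2 * y0 * y0 * (em * em)),
            a2 * y0 * (em * em) - c2 / 2] := by
      ext i j
      fin_cases i <;> fin_cases j
      · simp [Matrix.mul_apply, Fin.sum_univ_two]
        linear_combination (c2 / 2) * hu
          - (x0 * em * (b2 * em - y0 * (c2 / 2) * em)) * Complex.I_mul_I
      · simp [Matrix.mul_apply, Fin.sum_univ_two]
        ring
      · simp [Matrix.mul_apply, Fin.sum_univ_two]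
        linear_combination (Complex.I * (b2 - y0 * c2)) * hu
      · simp [Matrix.mul_apply, Fin.sum_univ_two]
        linear_combination (-(c2 / 2)) * hu
          - (y0 * em * (a2 * em - x0 * (c2 / 2) * em)) * Complex.I_mul_I
    rw [hJ1, hJ2]
    simp [Matrix.trace_fin_two, Matrix.mul_apply, Fin.sum_univ_two]
    linear_combination ((a1 * (em * em)) * (b2 - y0 * c2 + a2 * y0 * y0 * (em * em))
      + (a2 * (em * em)) * (b1 - y0 * c1 + a1 * y0 * y0 * (em * em))) * Complex.I_mul_I
end
end
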